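/- If (i_k)_{k≥0} is an almost-geodesic with respect to π, then the sequence (K_{·i_k})_{k≥0} converges in the product topology of (ℝ ∪ {−∞})^S to some element w of the minimal Martin space ℳᵐ. -/

import Mathlib

open Filter Topology

noncomputable section

namespace MaxPlus

variable {S : Type*}

/-- Weight of the path `p 0, p 1, ..., p n` for the kernel `A`. -/
def pathWeight (A : S → S → EReal) (p : ℕ → S) (n : ℕ) : EReal :=
  ∑ k ∈ Finset.range n, A (p k) (p (k + 1))

/-- The max-plus star kernel `A*`: supremum of weights of paths of length `≥ 0`. -/
def star (A : S → S → EReal) (i j : S) : EReal :=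
  ⨆ (n : ℕ) (p : ℕ → S) (_ : p 0 = i ∧ p n = j), pathWeight A p n

/-- The max-plus kernel `A⁺`: supremum of weights of paths of length `≥ 1`. -/
def plus (A : S → S → EReal) (i j : S) : EReal :=
  ⨆ (n : ℕ) (_ : 1 ≤ n) (p : ℕ → S) (_ : p 0 = i ∧ p n = j), pathWeight A p n

/-- `π` is a left super-harmonic row vector (with full support, being real valued). -/
def LeftSuperharmonic (A : S → S → EReal) (π : S → ℝ) : Prop :=
  ∀ j, (⨆ i, ((π i : EReal) + A i j)) ≤ (π j : EReal)

/-- The Martin kernel `K_{ij} = A*_{ij} - π_j`. -/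
def K (A : S → S → EReal) (π : S → ℝ) (i j : S) : EReal :=
  star A i j - (π j : EReal)

/-- `K♭_{ij} = A⁺_{ij} - π_j`. -/
def Kflat (A : S → S → EReal) (π : S → ℝ) (i j : S) : EReal :=
  plus A i j - (π j : EReal)

/-- The set `𝒦` of columns of the Martin kernel. -/
def kerCols (A : S → S → EReal) (π : S → ℝ) : Set (S → EReal) :=
  Set.range fun j => fun i => K A π i j

/-- The Martin space `ℳ`: closure of `𝒦` in the product topology. -/
def martin (A : S → S → EReal) (π : S → ℝ) : Set (S → EReal) :=
  closure (kerCols A π)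

/-- `μ_u(w)`: the limsup of `π_j + u_j` as `K_{·j} → w`. -/
def mu (A : S → S → EReal) (π : S → ℝ) (u : S → EReal) (w : S → EReal) : EReal :=
  ⨅ (W : Set (S → EReal)) (_ : W ∈ 𝓝 w),
    ⨆ (j : S) (_ : (fun i => K A π i j) ∈ W), ((π j : EReal) + u j)

/-- `w♭_i`: the liminf of `K♭_{ij}` as `K_{·j} → w`. -/
def flat (A : S → S → EReal) (π : S → ℝ) (w : S → EReal) (i : S) : EReal :=
  ⨆ (W : Set (S → EReal)) (_ : W ∈ 𝓝 w),
    ⨅ (j : S) (_ : (fun i' => K A π i' j) ∈ W), Kflat A π i j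

/-- The kernel `H(z,w) = μ_w(z)`. -/
def H (A : S → S → EReal) (π : S → ℝ) (z w : S → EReal) : EReal := mu A π w z

/-- The kernel `H♭(z,w) = μ_{w♭}(z)`. -/
def Hflat (A : S → S → EReal) (π : S → ℝ) (z w : S → EReal) : EReal :=
  mu A π (flat A π w) z

/-- The minimal Martin space `ℳᵐ = {w ∈ ℳ : H♭(w,w) = 0}`. -/
def martinMin (A : S → S → EReal) (π : S → ℝ) : Set (S → EReal) :=
  {w | w ∈ martin A π ∧ Hflat A π w w = 0}

/-- The maximal circuit mean `ρ(A)`. -/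
def maxCircuitMean (A : S → S → EReal) : EReal :=
  ⨆ (k : ℕ) (_ : 1 ≤ k) (p : ℕ → S) (_ : p k = p 0),
    (((k : ℝ)⁻¹ : ℝ) : EReal) * pathWeight A p k

/-- `α`-almost-geodesic with respect to the left super-harmonic vector `π`. -/
def IsAlmostGeodesic (A : S → S → EReal) (π : S → ℝ) (x : ℕ → S) : Prop :=
  ∃ α : ℝ, 0 ≤ α ∧ ∀ k : ℕ,
    (π (x k) : EReal) ≤ (α : EReal) + (π (x 0) : EReal) + pathWeight A x k

/-- The set `𝒮` of `π`-integrable super-harmonic vectors. -/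
def Sset (A : S → S → EReal) (π : S → ℝ) : Set (S → EReal) :=
  {u | (∀ i, u i ≠ ⊤) ∧ (∀ i, (⨆ j, A i j + u j) ≤ u i) ∧
    (⨆ j, ((π j : EReal) + u j)) < ⊤}

/-- The set `ℋ` of `π`-integrable harmonic vectors. -/
def Hset (A : S → S → EReal) (π : S → ℝ) : Set (S → EReal) :=
  {u | (∀ i, u i ≠ ⊤) ∧ (∀ i, (⨆ j, A i j + u j) = u i) ∧
    (⨆ j, ((π j : EReal) + u j)) < ⊤}

/-- A vector is normalised if `sup_j (π_j + u_j) = 0`. -/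
def Normalised (π : S → ℝ) (u : S → EReal) : Prop :=
  (⨆ j, ((π j : EReal) + u j)) = 0

/-- `ξ` is an extremal generator of `V`. -/
def ExtremalGen (V : Set (S → EReal)) (ξ : S → EReal) : Prop :=
  ξ ∈ V ∧ ξ ≠ (fun _ => (⊥ : EReal)) ∧
    ∀ u v, u ∈ V → v ∈ V → ξ = (fun i => u i ⊔ v i) → ξ = u ∨ ξ = v

end MaxPlus

/-!
Let `σ m` be the weight of the first `m` arcs of the almost-geodesic minus `π (x m)`
(`slack`). Superharmonicity of `π` makes `σ` nonincreasing and the almost-geodesic condition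
bounds it below, so `σ → L`. Prolonging paths `i → x k` by the arc `x k → x (k+1)` shows that
`K i (x k) - σ k` is nondecreasing in `k`, so every coordinate of `K · (x k)` converges and the
limit `w` lies in the Martin space. On the Martin space `w♭ ≤ w ≤ -π`, whence `H♭(w,w) ≤ 0`.
Conversely, the circuit `x k → x (k+1) → x k` gives
`w♭ (x k) ≥ min (w (x k)) (A (x k) (x (k+1)) + w (x (k+1))) ≥ L - σ k - π (x k)`,
and `L - σ k → 0` yields `H♭(w,w) ≥ 0`.
-/

namespace EReal

theorem tendsto_of_monotone_sub_coe {f : ℕ → EReal} {σ : ℕ → ℝ} {L : ℝ}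
    (hσ : Tendsto σ atTop (𝓝 L)) (hf : Monotone fun k => f k - σ k) :
    Tendsto f atTop (𝓝 ((⨆ k, f k - σ k) + L)) := by
  have hadd := continuousAt_add (p := ((⨆ k, f k - σ k), (L : EReal)))
    (.inr (coe_ne_bot L)) (.inr (coe_ne_top L))
  exact (hadd.tendsto.comp ((tendsto_atTop_iSup hf).prodMk_nhds (tendsto_coe.2 hσ))).congr
    fun _ => sub_add_cancel

end EReal

namespace MaxPlus

section

variable {S : Type*} {A : S → S → EReal} {π : S → ℝ}

section Paths

lemma pathWeight_zero (A : S → S → EReal) (p : ℕ → S) : pathWeight A p 0 = 0 :=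
  Finset.sum_range_zero _

lemma pathWeight_succ (A : S → S → EReal) (p : ℕ → S) (n : ℕ) :
    pathWeight A p (n + 1) = pathWeight A p n + A (p n) (p (n + 1)) :=
  Finset.sum_range_succ _ _

lemma pathWeight_add (A : S → S → EReal) (p : ℕ → S) (m n : ℕ) :
    pathWeight A p (m + n) = pathWeight A p m + pathWeight A (fun t => p (m + t)) n :=
  Finset.sum_range_add _ _ _

lemma pathWeight_le_star {p : ℕ → S} {n : ℕ} {i j : S} (h0 : p 0 = i) (hn : p n = j) :
    pathWeight A p n ≤ star A i j :=
  le_iSup_of_le n <| le_iSup_of_le p <| le_iSup_of_le ⟨h0, hn⟩ le_rfl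

lemma pathWeight_le_plus {p : ℕ → S} {n : ℕ} {i j : S} (hn1 : 1 ≤ n) (h0 : p 0 = i)
    (hn : p n = j) : pathWeight A p n ≤ plus A i j :=
  le_iSup_of_le n <| le_iSup_of_le hn1 <| le_iSup_of_le p <| le_iSup_of_le ⟨h0, hn⟩ le_rfl

lemma exists_path_of_lt_star {c : EReal} {i j : S} (h : c < star A i j) :
    ∃ n p, p 0 = i ∧ p n = j ∧ c < pathWeight A p n := by
  simp only [star, lt_iSup_iff] at h
  obtain ⟨n, p, ⟨h0, hn⟩, hc⟩ := h
  exact ⟨n, p, h0, hn, hc⟩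

lemma exists_pathWeight_append {p q : ℕ → S} {n : ℕ} (hpq : p n = q 0) (m : ℕ) :
    ∃ r : ℕ → S, r 0 = p 0 ∧ r (n + m) = q m ∧
      pathWeight A r (n + m) = pathWeight A p n + pathWeight A q m := by
  let r : ℕ → S := fun t => if t ≤ n then p t else q (t - n)
  have hr_left : ∀ t ≤ n, r t = p t := fun t ht => if_pos ht
  have hr_right : (fun t => r (n + t)) = q := by
    funext t
    rcases Nat.eq_zero_or_pos t with rfl | ht
    · simpa [r] using hpq
    · simp [r, ht.ne']
  refine ⟨r, hr_left 0 n.zero_le, congrFun hr_right m, ?_⟩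
  rw [pathWeight_add, hr_right]
  congr 1
  refine Finset.sum_congr rfl fun t ht => ?_
  have htn := Finset.mem_range.1 ht
  rw [hr_left t htn.le, hr_left (t + 1) htn]

lemma zero_le_star_self (i : S) : 0 ≤ star A i i := by
  simpa only [pathWeight_zero] using pathWeight_le_star (A := A) (p := fun _ => i) (n := 0) rfl rfl

lemma plus_le_star (i j : S) : plus A i j ≤ star A i j :=
  iSup₂_le fun _ _ => iSup₂_le fun _ h => pathWeight_le_star h.1 h.2

lemma star_le_plus_of_ne {i j : S} (hij : i ≠ j) : star A i j ≤ plus A i j := by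
  refine iSup₂_le fun n p => iSup_le fun h => ?_
  rcases Nat.eq_zero_or_pos n with rfl | hn
  · exact absurd (h.1.symm.trans h.2) hij
  · exact pathWeight_le_plus hn h.1 h.2

lemma star_add_star_le (i j l : S) : star A i j + star A j l ≤ star A i l := by
  refine EReal.add_le_of_forall_lt fun a ha b hb => ?_
  obtain ⟨n, p, hp0, hpn, hpa⟩ := exists_path_of_lt_star ha
  obtain ⟨m, q, hq0, hqm, hqb⟩ := exists_path_of_lt_star hb
  obtain ⟨r, hr0, hrm, hrw⟩ := exists_pathWeight_append (A := A) (hpn.trans hq0.symm) m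
  calc a + b ≤ pathWeight A p n + pathWeight A q m := add_le_add hpa.le hqb.le
    _ = pathWeight A r (n + m) := hrw.symm
    _ ≤ star A i l := pathWeight_le_star (hr0.trans hp0) (hrm.trans hqm)

lemma add_star_le_plus (i j l : S) : A i j + star A j l ≤ plus A i l := by
  refine EReal.add_le_of_forall_lt fun a ha b hb => ?_
  obtain ⟨m, q, hq0, hqm, hqb⟩ := exists_path_of_lt_star hb
  let p : ℕ → S := fun t => if t = 0 then i else j
  obtain ⟨r, hr0, hrm, hrw⟩ := exists_pathWeight_append (A := A) (p := p) (n := 1) hq0.symm m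
  calc a + b ≤ pathWeight A p 1 + pathWeight A q m :=
        add_le_add (by simpa [pathWeight, p] using ha.le) hqb.le
    _ = pathWeight A r (1 + m) := hrw.symm
    _ ≤ plus A i l := pathWeight_le_plus (by omega) hr0 (hrm.trans hqm)

lemma le_star (i j : S) : A i j ≤ star A i j :=
  calc A i j = A i j + 0 := (add_zero _).symm
    _ ≤ A i j + star A j j := by gcongr; exact zero_le_star_self j
    _ ≤ plus A i j := add_star_le_plus i j j
    _ ≤ star A i j := plus_le_star i j

end Paths

section MartinKernel

lemma K_add_K_add_le (i j l : S) : K A π i j + (K A π j l + π j) ≤ K A π i l := by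
  simp only [K, sub_eq_add_neg, ← EReal.coe_neg]
  calc star A i j + ((-π j : ℝ) : EReal) + (star A j l + ((-π l : ℝ) : EReal) + π j)
      = star A i j + star A j l + ((-π l : ℝ) : EReal) + (((-π j : ℝ) : EReal) + π j) := by
        ac_rfl
    _ = star A i j + star A j l + ((-π l : ℝ) : EReal) := by
      rw [← EReal.coe_add, neg_add_cancel, EReal.coe_zero, add_zero]
    _ ≤ star A i l + ((-π l : ℝ) : EReal) := by gcongr; exact star_add_star_le i j l

lemma add_K_le_Kflat (i j l : S) : A i j + K A π j l ≤ Kflat A π i l := by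
  simp only [K, Kflat, sub_eq_add_neg, ← add_assoc]
  gcongr
  exact add_star_le_plus i j l

lemma Kflat_le_K (i j : S) : Kflat A π i j ≤ K A π i j :=
  EReal.sub_le_sub (plus_le_star i j) le_rfl

lemma Kflat_eq_K_of_ne {i j : S} (hij : i ≠ j) : Kflat A π i j = K A π i j := by
  rw [Kflat, K, le_antisymm (plus_le_star i j) (star_le_plus_of_ne hij)]

lemma flat_le_of_mem_martin {w : S → EReal} (hw : w ∈ martin A π) (i : S) :
    flat A π w i ≤ w i := by
  refine le_of_forall_gt_imp_ge_of_dense fun t ht => iSup₂_le fun V hV => ?_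
  obtain ⟨_, ⟨hfV, hft⟩, j, rfl⟩ := mem_closure_iff_nhds.1 hw _
    (inter_mem hV ((isOpen_lt (continuous_apply i) continuous_const).mem_nhds ht))
  exact (iInf₂_le j hfV).trans ((Kflat_le_K i j).trans hft.le)

/-- For `K_{·l}` near `w`: if `l ≠ i` then `K♭_{il} = K_{il} ≈ w i`, and if `l = i` then
`K♭_{ii} ≥ A_{ij} + K_{ji} ≈ A_{ij} + w j`. -/
lemma min_le_flat (w : S → EReal) (i j : S) : min (w i) (A i j + w j) ≤ flat A π w i := by
  refine le_of_forall_lt_imp_le_of_dense fun c hc => ?_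
  obtain ⟨hci, hcj⟩ := lt_min_iff.1 hc
  have hev : ∀ᶠ b in 𝓝 (w j), c < A i j + b :=
    (continuous_const.prodMk continuous_id).tendsto (w j)
      |>.eventually (EReal.lowerSemicontinuous_add (A i j, w j) c hcj)
  have hwj : ⊥ < w j := bot_lt_iff_ne_bot.2 fun h => by simp [h] at hcj
  have := nhdsLT_neBot_of_exists_lt ⟨⊥, hwj⟩
  obtain ⟨b, hbj, hcb⟩ := hev.exists_lt
  let V : Set (S → EReal) := {f | c < f i} ∩ {f | b < f j}
  have hV : V ∈ 𝓝 w := ((isOpen_lt continuous_const (continuous_apply i)).inter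
    (isOpen_lt continuous_const (continuous_apply j))).mem_nhds ⟨hci, hbj⟩
  refine le_iSup₂_of_le V hV (le_iInf₂ fun l ⟨hcl, hbl⟩ => ?_)
  rcases eq_or_ne i l with rfl | hil
  · exact hcb.le.trans ((add_le_add le_rfl hbl.le).trans (add_K_le_Kflat i j i))
  · exact (Kflat_eq_K_of_ne hil).symm ▸ hcl.le

lemma le_Hflat_of_tendsto {x : ℕ → S} {z w : S → EReal}
    (hz : Tendsto (fun k i => K A π i (x k)) atTop (𝓝 z)) {c : ℕ → EReal} {a : EReal}
    (hc : Tendsto c atTop (𝓝 a)) (hle : ∀ k, c k ≤ π (x k) + flat A π w (x k)) :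
    a ≤ Hflat A π z w :=
  le_iInf₂ fun _ hW => by
    refine le_of_tendsto hc ?_
    filter_upwards [hz hW] with k hk
    exact (hle k).trans (le_iSup₂_of_le (x k) hk le_rfl)

end MartinKernel

section Superharmonic

lemma LeftSuperharmonic.coe_add_le (hπ : LeftSuperharmonic A π) (i j : S) :
    (π i : EReal) + A i j ≤ π j :=
  (le_iSup (fun i => (π i : EReal) + A i j) i).trans (hπ j)

lemma LeftSuperharmonic.coe_add_pathWeight_le (hπ : LeftSuperharmonic A π) (p : ℕ → S)
    (n : ℕ) : (π (p 0) : EReal) + pathWeight A p n ≤ π (p n) := by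
  induction n with
  | zero => rw [pathWeight_zero, add_zero]
  | succ n ih =>
    calc (π (p 0) : EReal) + pathWeight A p (n + 1)
        = π (p 0) + pathWeight A p n + A (p n) (p (n + 1)) := by rw [pathWeight_succ, add_assoc]
      _ ≤ π (p n) + A (p n) (p (n + 1)) := by gcongr
      _ ≤ π (p (n + 1)) := hπ.coe_add_le _ _

lemma LeftSuperharmonic.pathWeight_ne_top (hπ : LeftSuperharmonic A π) (p : ℕ → S) (n : ℕ) :
    pathWeight A p n ≠ ⊤ := fun h => by
  simpa [h] using hπ.coe_add_pathWeight_le p n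

lemma LeftSuperharmonic.star_le (hπ : LeftSuperharmonic A π) (i j : S) :
    star A i j ≤ ((π j - π i : ℝ) : EReal) := by
  refine iSup₂_le fun n p => iSup_le fun ⟨h0, hn⟩ => ?_
  rw [EReal.coe_sub, EReal.le_sub_iff_add_le (.inl (EReal.coe_ne_bot _))
    (.inl (EReal.coe_ne_top _)), add_comm, ← h0, ← hn]
  exact hπ.coe_add_pathWeight_le p n

lemma LeftSuperharmonic.K_le (hπ : LeftSuperharmonic A π) (i j : S) :
    K A π i j ≤ ((-π i : ℝ) : EReal) :=
  calc K A π i j ≤ ((π j - π i : ℝ) : EReal) - π j := EReal.sub_le_sub (hπ.star_le i j) le_rfl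
    _ = ((-π i : ℝ) : EReal) := by rw [← EReal.coe_sub]; congr 1; ring

lemma LeftSuperharmonic.le_of_mem_martin (hπ : LeftSuperharmonic A π) {w : S → EReal}
    (hw : w ∈ martin A π) (i : S) : w i ≤ ((-π i : ℝ) : EReal) := by
  have hclosed : IsClosed {f : S → EReal | ∀ i, f i ≤ ((-π i : ℝ) : EReal)} := by
    simpa only [Set.ofPred_forall] using
      isClosed_iInter fun i => isClosed_le (continuous_apply i) continuous_const
  exact closure_minimal (by rintro _ ⟨j, rfl⟩ i; exact hπ.K_le i j) hclosed hw i

lemma LeftSuperharmonic.Hflat_nonpos (hπ : LeftSuperharmonic A π) {w : S → EReal}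
    (hw : w ∈ martin A π) (z : S → EReal) : Hflat A π z w ≤ 0 :=
  iInf₂_le_of_le Set.univ univ_mem <| iSup₂_le fun j _ =>
    calc (π j : EReal) + flat A π w j ≤ π j + ((-π j : ℝ) : EReal) := by
          gcongr; exact (flat_le_of_mem_martin hw j).trans (hπ.le_of_mem_martin hw j)
      _ = 0 := by rw [← EReal.coe_add, add_neg_cancel, EReal.coe_zero]

end Superharmonic

section AlmostGeodesic

variable {x : ℕ → S}

/-- Along an almost-geodesic the path weights are finite (`coe_slack_add`), so `toReal` loses
nothing here. -/
def slack (A : S → S → EReal) (π : S → ℝ) (x : ℕ → S) (m : ℕ) : ℝ :=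
  (pathWeight A x m).toReal - π (x m)

lemma IsAlmostGeodesic.pathWeight_ne_bot (hx : IsAlmostGeodesic A π x) (m : ℕ) :
    pathWeight A x m ≠ ⊥ := fun h => by
  obtain ⟨α, -, hα⟩ := hx
  simpa [h] using hα m

lemma coe_slack_add (hπ : LeftSuperharmonic A π) (hx : IsAlmostGeodesic A π x) (m : ℕ) :
    ((slack A π x m + π (x m) : ℝ) : EReal) = pathWeight A x m := by
  rw [slack, sub_add_cancel, EReal.coe_toReal (hπ.pathWeight_ne_top x m) (hx.pathWeight_ne_bot m)]

lemma arc_eq_coe_slack (hπ : LeftSuperharmonic A π) (hx : IsAlmostGeodesic A π x) (k : ℕ) :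
    A (x k) (x (k + 1)) =
      ((slack A π x (k + 1) - slack A π x k + π (x (k + 1)) - π (x k) : ℝ) : EReal) := by
  have h := pathWeight_succ A x k
  rw [← coe_slack_add hπ hx, ← coe_slack_add hπ hx] at h
  calc A (x k) (x (k + 1))
      = ((slack A π x k + π (x k) : ℝ) : EReal) + A (x k) (x (k + 1))
          - ((slack A π x k + π (x k) : ℝ) : EReal) := EReal.add_sub_cancel_left.symm
    _ = _ := by rw [← h, ← EReal.coe_sub]; congr 1; ring

lemma slack_antitone (hπ : LeftSuperharmonic A π) (hx : IsAlmostGeodesic A π x) :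
    Antitone (slack A π x) := by
  refine antitone_nat_of_succ_le fun k => ?_
  have h := hπ.coe_add_le (x k) (x (k + 1))
  rw [arc_eq_coe_slack hπ hx, ← EReal.coe_add, EReal.coe_le_coe_iff] at h
  linarith

lemma slack_bddBelow (hπ : LeftSuperharmonic A π) (hx : IsAlmostGeodesic A π x) :
    BddBelow (Set.range (slack A π x)) := by
  have ⟨α, _, hα⟩ := hx
  refine ⟨-α - π (x 0), Set.forall_mem_range.2 fun m => ?_⟩
  have h := hα m
  rw [← coe_slack_add hπ hx, ← EReal.coe_add, ← EReal.coe_add, EReal.coe_le_coe_iff] at h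
  linarith

lemma monotone_K_sub_slack (hπ : LeftSuperharmonic A π) (hx : IsAlmostGeodesic A π x)
    (i : S) : Monotone fun k => K A π i (x k) - slack A π x k := by
  refine monotone_nat_of_le_succ fun k => ?_
  set σ := slack A π x
  have hstep : ((σ (k + 1) - σ k : ℝ) : EReal) ≤ K A π (x k) (x (k + 1)) + π (x k) :=
    calc ((σ (k + 1) - σ k : ℝ) : EReal)
        = A (x k) (x (k + 1)) - π (x (k + 1)) + π (x k) := by
          rw [arc_eq_coe_slack hπ hx, ← EReal.coe_sub, ← EReal.coe_add]; congr 1; ring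
      _ ≤ K A π (x k) (x (k + 1)) + π (x k) := by
          gcongr; exact EReal.sub_le_sub (le_star _ _) le_rfl
  calc K A π i (x k) - σ k = K A π i (x k) + ((σ (k + 1) - σ k : ℝ) : EReal) - σ (k + 1) := by
        rw [add_sub_assoc, ← EReal.coe_sub, sub_sub_cancel_left, EReal.coe_neg, sub_eq_add_neg]
    _ ≤ K A π i (x k) + (K A π (x k) (x (k + 1)) + π (x k)) - σ (k + 1) :=
        EReal.sub_le_sub (add_le_add le_rfl hstep) le_rfl
    _ ≤ K A π i (x (k + 1)) - σ (k + 1) := EReal.sub_le_sub (K_add_K_add_le _ _ _) le_rfl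

lemma coe_slack_sub_le_K (hπ : LeftSuperharmonic A π) (hx : IsAlmostGeodesic A π x)
    {k m : ℕ} (hkm : k ≤ m) :
    ((slack A π x m - slack A π x k - π (x k) : ℝ) : EReal) ≤ K A π (x k) (x m) := by
  set σ := slack A π x
  have hself : ((-π (x k) : ℝ) : EReal) ≤ K A π (x k) (x k) := by
    rw [EReal.coe_neg, ← zero_sub]; exact EReal.sub_le_sub (zero_le_star_self _) le_rfl
  calc ((σ m - σ k - π (x k) : ℝ) : EReal) = ((-π (x k) : ℝ) : EReal) - σ k + σ m := by
        rw [← EReal.coe_sub, ← EReal.coe_add]; congr 1; ring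
    _ ≤ K A π (x k) (x k) - σ k + σ m := add_le_add (EReal.sub_le_sub hself le_rfl) le_rfl
    _ ≤ K A π (x k) (x m) - σ m + σ m :=
        add_le_add (monotone_K_sub_slack hπ hx (x k) hkm) le_rfl
    _ = K A π (x k) (x m) := EReal.sub_add_cancel

lemma coe_sub_slack_le_add_flat (hπ : LeftSuperharmonic A π) (hx : IsAlmostGeodesic A π x)
    {L : ℝ} {w : S → EReal} (hw : ∀ m, ((L - slack A π x m - π (x m) : ℝ) : EReal) ≤ w (x m))
    (k : ℕ) : ((L - slack A π x k : ℝ) : EReal) ≤ π (x k) + flat A π w (x k) := by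
  refine le_trans ?_ (add_le_add le_rfl (min_le_flat w (x k) (x (k + 1))))
  rw [← min_add_add_left]
  refine le_min ?_ ?_
  · calc ((L - slack A π x k : ℝ) : EReal)
        = π (x k) + ((L - slack A π x k - π (x k) : ℝ) : EReal) := by
          rw [← EReal.coe_add]; congr 1; ring
      _ ≤ π (x k) + w (x k) := by gcongr; exact hw k
  · calc ((L - slack A π x k : ℝ) : EReal)
        = π (x k) + (A (x k) (x (k + 1)) +
            ((L - slack A π x (k + 1) - π (x (k + 1)) : ℝ) : EReal)) := by
          rw [arc_eq_coe_slack hπ hx, ← EReal.coe_add, ← EReal.coe_add]; congr 1; ring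
      _ ≤ π (x k) + (A (x k) (x (k + 1)) + w (x (k + 1))) := by gcongr; exact hw (k + 1)

end AlmostGeodesic

end

theorem almostGeodesic_converges_general {S : Type*} (A : S → S → EReal)
    (π : S → ℝ) (hπ : LeftSuperharmonic A π)
    (x : ℕ → S) (hx : IsAlmostGeodesic A π x) :
    ∃ w ∈ martinMin A π,
      Tendsto (fun k => fun i => K A π i (x k)) atTop (𝓝 w) := by
  set σ := slack A π x
  set L := ⨅ m, σ m
  have hσ : Tendsto σ atTop (𝓝 L) :=
    tendsto_atTop_ciInf (slack_antitone hπ hx) (slack_bddBelow hπ hx)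
  set w : S → EReal := fun i => (⨆ k, K A π i (x k) - σ k) + L
  have hw : Tendsto (fun k i => K A π i (x k)) atTop (𝓝 w) := tendsto_pi_nhds.2 fun i =>
    EReal.tendsto_of_monotone_sub_coe hσ (monotone_K_sub_slack hπ hx i)
  have hwM : w ∈ martin A π := mem_closure_of_tendsto hw (.of_forall fun k => ⟨x k, rfl⟩)
  have hlow : ∀ m, ((L - σ m - π (x m) : ℝ) : EReal) ≤ w (x m) := fun m => by
    refine ge_of_tendsto (tendsto_pi_nhds.1 hw (x m)) ?_
    filter_upwards [eventually_ge_atTop m] with t hmt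
    refine le_trans ?_ (coe_slack_sub_le_K hπ hx hmt)
    exact EReal.coe_le_coe_iff.2 (by linarith [ciInf_le (slack_bddBelow hπ hx) t])
  have hgap : Tendsto (fun k => ((L - σ k : ℝ) : EReal)) atTop (𝓝 0) := by
    simpa using EReal.tendsto_coe.2 (hσ.const_sub L)
  refine ⟨w, ⟨hwM, le_antisymm (hπ.Hflat_nonpos hwM w) ?_⟩, hw⟩
  exact le_Hflat_of_tendsto hw hgap (coe_sub_slack_le_add_flat hπ hx hlow)

/-- if `(i_k)` is an almost-geodesic with respect to `π`, then the columns
`K_{·i_k}` converge in the product topology to some element of the minimal Martin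
space `ℳᵐ`. -/
theorem almostGeodesic_converges {S : Type*} (A : S → S → EReal)
    (hA : ∀ i j, A i j ≠ ⊤) (π : S → ℝ) (hπ : LeftSuperharmonic A π)
    (x : ℕ → S) (hx : IsAlmostGeodesic A π x) :
    ∃ w ∈ martinMin A π,
      Tendsto (fun k => fun i => K A π i (x k)) atTop (𝓝 w) :=
  almostGeodesic_converges_general A π hπ x hx

end MaxPlus
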